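/- Under the uniform choice model with probability p, the pairwise policy—which offers each patient the single provider assigned by a maximum-weight bipartite matching on weights θ—achieves expected match quality at least p times the expected match quality of the optimal assortment policy. -/
import Mathlib


open Finset

noncomputable section
open scoped Classical

/-- Most preferred (highest quality) provider in `S`, ties broken by least index. -/
def pick {M : ℕ} (q : Fin M → ℝ) (S : Finset (Fin M)) : Option (Fin M) :=
  if h : S.Nonempty then
    some ((S.filter fun j => ∀ k ∈ S, q k ≤ q j).min' (by
      obtain ⟨j, hj, hmax⟩ := S.exists_max_image q h
      exact ⟨j, Finset.mem_filter.2 ⟨hj, hmax⟩⟩))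
  else none

/-- State (available providers, matches so far) of the sequential matching process
after the first `t` patients (in the order `σ`) have responded.  Patient `i` accepts
their most preferred offered available provider iff the coin `c i` comes up true. -/
def runProc (N M : ℕ) (θ : Fin N → Fin M → ℝ) (X : Fin N → Fin M → Bool)
    (σ : Equiv.Perm (Fin N)) (c : Fin N → Bool) :
    ℕ → Finset (Fin M) × (Fin N → Option (Fin M))
  | 0 => (Finset.univ, fun _ => none)
  | t + 1 =>
    let st := runProc N M θ X σ c t
    if ht : t < N then
      let i := σ ⟨t, ht⟩
      if c i then
        match pick (θ i) (st.1.filter fun j => X i j) with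
        | some j => (st.1.erase j, Function.update st.2 i (some j))
        | none => st
      else st
    else st

/-- The realized matches of the process. -/
def matchesOf (N M : ℕ) (θ : Fin N → Fin M → ℝ) (X : Fin N → Fin M → Bool)
    (σ : Equiv.Perm (Fin N)) (c : Fin N → Bool) : Fin N → Option (Fin M) :=
  (runProc N M θ X σ c N).2

/-- Probability weight of a coin-flip outcome (each coin independently true w.p. `p`). -/
def coinWt (N : ℕ) (p : ℝ) (c : Fin N → Bool) : ℝ :=
  ∏ i, if c i then p else 1 - p

/-- Match rate: expected fraction of matched patients, over a uniformly random
response order and independent acceptance coins of bias `p`. -/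
def MR (N M : ℕ) (p : ℝ) (θ : Fin N → Fin M → ℝ) (X : Fin N → Fin M → Bool) : ℝ :=
  (1 / (N.factorial : ℝ)) * ∑ σ : Equiv.Perm (Fin N), ∑ c : Fin N → Bool,
    coinWt N p c *
      (((Finset.univ.filter fun i => (matchesOf N M θ X σ c i).isSome).card : ℝ) / N)

def qualOf {N M : ℕ} (θ : Fin N → Fin M → ℝ) (m : Fin N → Option (Fin M)) (i : Fin N) : ℝ :=
  match m i with
  | some j => θ i j
  | none => 0

/-- Match quality: expected average `θ`-value over realized matches. -/
def MQ (N M : ℕ) (p : ℝ) (θ : Fin N → Fin M → ℝ) (X : Fin N → Fin M → Bool) : ℝ :=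
  (1 / (N.factorial : ℝ)) * ∑ σ : Equiv.Perm (Fin N), ∑ c : Fin N → Bool,
    coinWt N p c * ((1 / (N : ℝ)) * ∑ i, qualOf θ (matchesOf N M θ X σ c) i)

/-- Assortments are disjoint singletons: each patient offered at most one provider,
each provider offered to at most one patient. -/
def IsPairwise (N M : ℕ) (X : Fin N → Fin M → Bool) : Prop :=
  (∀ i, (Finset.univ.filter fun j => X i j).card ≤ 1) ∧
  (∀ j, (Finset.univ.filter fun i => X i j).card ≤ 1)

/-- Total θ-weight of the pairs selected by a 0-1 matrix. -/
def weightOf (N M : ℕ) (θ : Fin N → Fin M → ℝ) (X : Fin N → Fin M → Bool) : ℝ :=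
  ∑ i, ∑ j, if X i j then θ i j else 0


lemma pick_mem {M : ℕ} {q : Fin M → ℝ} {S : Finset (Fin M)} {j : Fin M}
    (h : pick q S = some j) : j ∈ S := by
  unfold pick at h
  split at h
  · simp only [Option.some.injEq] at h
    subst h
    exact (Finset.mem_filter.1 (Finset.min'_mem _ _)).1
  · exact absurd h (by simp)

lemma pick_eq_none {M : ℕ} {q : Fin M → ℝ} {S : Finset (Fin M)}
    (h : pick q S = none) : S = ∅ := by
  unfold pick at h
  split at h
  · exact absurd h (by simp)
  · next hS => exact Finset.not_nonempty_iff_eq_empty.1 hS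

lemma sum_prod_bool (N : ℕ) (h : Fin N → Bool → ℝ) :
    ∑ c : Fin N → Bool, ∏ i, h i (c i) = ∏ i, (h i true + h i false) := by
  rw [← Fintype.piFinset_univ, ← Finset.prod_univ_sum]
  simp

variable {N M : ℕ} {θ : Fin N → Fin M → ℝ} {X : Fin N → Fin M → Bool}
  {σ : Equiv.Perm (Fin N)} {c : Fin N → Bool} {t : ℕ}

lemma runProc_succ_ge (h : ¬ t < N) :
    runProc N M θ X σ c (t+1) = runProc N M θ X σ c t := by
  simp [runProc, h]

lemma runProc_succ_false (ht : t < N) (hc : c (σ ⟨t, ht⟩) = false) :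
    runProc N M θ X σ c (t+1) = runProc N M θ X σ c t := by
  simp [runProc, ht, hc]

lemma runProc_succ_none (ht : t < N) (hc : c (σ ⟨t, ht⟩) = true)
    (hp : pick (θ (σ ⟨t, ht⟩)) ((runProc N M θ X σ c t).1.filter
      fun j => X (σ ⟨t, ht⟩) j) = none) :
    runProc N M θ X σ c (t+1) = runProc N M θ X σ c t := by
  simp only [runProc]
  rw [dif_pos ht, if_pos hc, hp]

lemma runProc_succ_some {j : Fin M} (ht : t < N) (hc : c (σ ⟨t, ht⟩) = true)
    (hp : pick (θ (σ ⟨t, ht⟩)) ((runProc N M θ X σ c t).1.filter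
      fun j => X (σ ⟨t, ht⟩) j) = some j) :
    runProc N M θ X σ c (t+1) =
      ((runProc N M θ X σ c t).1.erase j,
        Function.update (runProc N M θ X σ c t).2 (σ ⟨t, ht⟩) (some j)) := by
  simp only [runProc]
  rw [dif_pos ht, if_pos hc, hp]

lemma runProc_inv (t : ℕ) :
    ∀ i j, (runProc N M θ X σ c t).2 i = some j →
      j ∉ (runProc N M θ X σ c t).1 := by
  induction t with
  | zero => intro i j h; simp [runProc] at h
  | succ t ih =>
    intro i j h
    by_cases ht : t < N
    · by_cases hc : c (σ ⟨t, ht⟩) = true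
      · cases hp : pick (θ (σ ⟨t, ht⟩)) ((runProc N M θ X σ c t).1.filter
            fun j => X (σ ⟨t, ht⟩) j) with
        | none => rw [runProc_succ_none ht hc hp] at h ⊢; exact ih i j h
        | some j0 =>
          rw [runProc_succ_some ht hc hp] at h ⊢
          dsimp only at h ⊢
          rcases eq_or_ne i (σ ⟨t, ht⟩) with hi | hi
          · subst hi
            rw [Function.update_self] at h
            cases h; simp
          · rw [Function.update_of_ne hi] at h
            intro hmem
            exact ih i j h (Finset.mem_of_mem_erase hmem)
      · rw [runProc_succ_false ht (by simpa using hc)] at h ⊢; exact ih i j h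
    · rw [runProc_succ_ge ht] at h ⊢; exact ih i j h

lemma runProc_inj (t : ℕ) :
    ∀ i i' j, (runProc N M θ X σ c t).2 i = some j →
      (runProc N M θ X σ c t).2 i' = some j → i = i' := by
  induction t with
  | zero => intro i i' j h; simp [runProc] at h
  | succ t ih =>
    intro i i' j h h'
    by_cases ht : t < N
    · by_cases hc : c (σ ⟨t, ht⟩) = true
      · cases hp : pick (θ (σ ⟨t, ht⟩)) ((runProc N M θ X σ c t).1.filter
            fun j => X (σ ⟨t, ht⟩) j) with
        | none => rw [runProc_succ_none ht hc hp] at h h'; exact ih i i' j h h'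
        | some j0 =>
          have hj0 : j0 ∈ (runProc N M θ X σ c t).1 :=
            Finset.mem_filter.1 (pick_mem hp) |>.1
          rw [runProc_succ_some ht hc hp] at h h'
          dsimp only at h h'
          rcases eq_or_ne i (σ ⟨t, ht⟩) with hi | hi <;>
            rcases eq_or_ne i' (σ ⟨t, ht⟩) with hi' | hi'
          · rw [hi, hi']
          · rw [hi, Function.update_self] at h
            cases h
            rw [Function.update_of_ne hi'] at h'
            exact absurd hj0 (runProc_inv t i' j h')
          · rw [hi', Function.update_self] at h'
            cases h'
            rw [Function.update_of_ne hi] at h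
            exact absurd hj0 (runProc_inv t i j h)
          · rw [Function.update_of_ne hi] at h
            rw [Function.update_of_ne hi'] at h'
            exact ih i i' j h h'
      · rw [runProc_succ_false ht (by simpa using hc)] at h h'; exact ih i i' j h h'
    · rw [runProc_succ_ge ht] at h h'; exact ih i i' j h h'

lemma col_unique (hpair : IsPairwise N M X) {i i' : Fin N} {j : Fin M}
    (h : X i j = true) (h' : X i' j = true) : i = i' :=
  Finset.card_le_one.1 (hpair.2 j) i (by simp [h]) i' (by simp [h'])

lemma runProc_pair (hpair : IsPairwise N M X) (t : ℕ) :
    (∀ i j, X i j = true → t ≤ ((σ.symm i : Fin N) : ℕ) →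
      j ∈ (runProc N M θ X σ c t).1) ∧
    (∀ i : Fin N, t ≤ ((σ.symm i : Fin N) : ℕ) → (runProc N M θ X σ c t).2 i = none) ∧
    (∀ i : Fin N, ((σ.symm i : Fin N) : ℕ) < t →
      (runProc N M θ X σ c t).2 i =
        if c i then pick (θ i) (Finset.univ.filter fun j => X i j) else none) := by
  induction t with
  | zero =>
    refine ⟨fun i j _ _ => by simp [runProc], fun i _ => by simp [runProc],
      fun i h => absurd h (by omega)⟩
  | succ t ih =>
    obtain ⟨ihA, ihB, ihC⟩ := ih
    by_cases ht : t < N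
    · have hsymm : σ.symm (σ ⟨t, ht⟩) = ⟨t, ht⟩ := Equiv.symm_apply_apply σ _
      have hne : ∀ i : Fin N, t + 1 ≤ ((σ.symm i : Fin N) : ℕ) → i ≠ σ ⟨t, ht⟩ := by
        intro i hle hi
        rw [hi, hsymm] at hle; simp at hle
      have heq : ∀ i : Fin N, ((σ.symm i : Fin N) : ℕ) = t → i = σ ⟨t, ht⟩ := by
        intro i hi
        have : σ.symm i = ⟨t, ht⟩ := Fin.ext hi
        have := congrArg σ this
        rwa [Equiv.apply_symm_apply] at this
      by_cases hc : c (σ ⟨t, ht⟩) = true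
      · have hfilt : ((runProc N M θ X σ c t).1.filter fun j => X (σ ⟨t, ht⟩) j) =
            (Finset.univ.filter fun j => X (σ ⟨t, ht⟩) j) := by
          ext j
          simp only [Finset.mem_filter, Finset.mem_univ, true_and]
          refine ⟨fun h => h.2, fun h => ⟨ihA _ j h (by rw [hsymm]), h⟩⟩
        cases hp : pick (θ (σ ⟨t, ht⟩)) ((runProc N M θ X σ c t).1.filter
            fun j => X (σ ⟨t, ht⟩) j) with
        | none =>
          rw [runProc_succ_none ht hc hp]
          refine ⟨fun i j hx hle => ihA i j hx (by omega),
            fun i hle => ihB i (by omega), fun i hlt => ?_⟩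
          rcases lt_or_eq_of_le (Nat.lt_succ_iff.1 hlt) with h | h
          · exact ihC i h
          · have hi := heq i h; subst hi
            rw [ihB _ (le_of_eq h.symm), if_pos hc, ← hfilt, hp]
        | some j0 =>
          have hx0 : X (σ ⟨t, ht⟩) j0 = true :=
            (Finset.mem_filter.1 (pick_mem hp)).2
          rw [runProc_succ_some ht hc hp]
          dsimp only
          refine ⟨fun i j hx hle => ?_, fun i hle => ?_, fun i hlt => ?_⟩
          · have hi : i ≠ σ ⟨t, ht⟩ := hne i hle
            refine Finset.mem_erase.2 ⟨fun hj => ?_, ihA i j hx (by omega)⟩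
            subst hj
            exact hi (col_unique hpair hx hx0)
          · rw [Function.update_of_ne (hne i hle)]
            exact ihB i (by omega)
          · rcases lt_or_eq_of_le (Nat.lt_succ_iff.1 hlt) with h | h
            · have hi : i ≠ σ ⟨t, ht⟩ := by
                intro hh; rw [hh, hsymm] at h; simp at h
              rw [Function.update_of_ne hi]
              exact ihC i h
            · have hi := heq i h; subst hi
              rw [Function.update_self, if_pos hc, ← hfilt, hp]
      · rw [runProc_succ_false ht (by simpa using hc)]
        refine ⟨fun i j hx hle => ihA i j hx (by omega),
          fun i hle => ihB i (by omega), fun i hlt => ?_⟩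
        rcases lt_or_eq_of_le (Nat.lt_succ_iff.1 hlt) with h | h
        · exact ihC i h
        · have hi := heq i h; subst hi
          rw [ihB _ (le_of_eq h.symm), if_neg (by simpa using hc)]
    · rw [runProc_succ_ge ht]
      have hN : ∀ i : Fin N, ((σ.symm i : Fin N) : ℕ) < N := fun i => (σ.symm i).is_lt
      refine ⟨fun i j hx hle => absurd (hN i) (by omega),
        fun i hle => absurd (hN i) (by omega), fun i hlt => ihC i (by omega)⟩

lemma matchesOf_pair (hpair : IsPairwise N M X) (i : Fin N) :
    matchesOf N M θ X σ c i =
      if c i then pick (θ i) (Finset.univ.filter fun j => X i j) else none :=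
  (runProc_pair hpair N).2.2 i (σ.symm i).is_lt

lemma qual_pair (hpair : IsPairwise N M X) (i : Fin N) :
    qualOf θ (matchesOf N M θ X σ c) i =
      if c i then (∑ j, if X i j then θ i j else 0) else 0 := by
  rw [qualOf, matchesOf_pair hpair]
  by_cases hc : c i
  · rw [if_pos hc, if_pos hc]
    cases hp : pick (θ i) (Finset.univ.filter fun j => X i j) with
    | none =>
      have he := pick_eq_none hp
      have : ∀ j, ¬ (X i j = true) := by
        intro j hj
        have : j ∈ (Finset.univ.filter fun j => X i j) := by simp [hj]
        rw [he] at this; simp at this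
      simp only []
      rw [Finset.sum_eq_zero]
      intro j _
      rw [if_neg (this j)]
    | some j0 =>
      have hmem := pick_mem hp
      have hsingle : (Finset.univ.filter fun j => X i j) = {j0} :=
        Finset.eq_singleton_iff_unique_mem.2 ⟨hmem,
          fun x hx => Finset.card_le_one.1 (hpair.1 i) x hx j0 hmem⟩
      simp only []
      rw [← Finset.sum_filter, hsingle, Finset.sum_singleton]
  · rw [if_neg hc, if_neg hc]

lemma sum_coin (N : ℕ) (p : ℝ) (i : Fin N) (w : ℝ) :
    ∑ c : Fin N → Bool, coinWt N p c * (if c i then w else 0) = p * w := by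
  have key : ∀ c : Fin N → Bool, coinWt N p c * (if c i then (1:ℝ) else 0) =
      ∏ i', ((if c i' then p else 1 - p) * (if i' = i then (if c i' then (1:ℝ) else 0) else 1)) := by
    intro c
    rw [Finset.prod_mul_distrib]
    congr 1
    rw [Finset.prod_ite_eq' Finset.univ i (fun i' => if c i' then (1:ℝ) else 0)]
    simp
  have : ∑ c : Fin N → Bool, coinWt N p c * (if c i then w else 0) =
      (∑ c : Fin N → Bool, coinWt N p c * (if c i then (1:ℝ) else 0)) * w := by
    rw [Finset.sum_mul]
    congr 1; ext c
    by_cases hc : c i <;> simp [hc, mul_comm, mul_assoc]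
  rw [this]
  congr 1
  calc ∑ c : Fin N → Bool, coinWt N p c * (if c i then (1:ℝ) else 0)
      = ∑ c : Fin N → Bool, ∏ i',
          ((if c i' then p else 1 - p) * (if i' = i then (if c i' then (1:ℝ) else 0) else 1)) := by
        exact Finset.sum_congr rfl fun c _ => key c
    _ = ∏ i', ((p * (if i' = i then (1:ℝ) else 1)) + ((1-p) * (if i' = i then (0:ℝ) else 1))) := by
        rw [sum_prod_bool N (fun i' b => (if b then p else 1 - p) *
          (if i' = i then (if b then (1:ℝ) else 0) else 1))]
        simp
    _ = p := by
        rw [Finset.prod_congr rfl (g := fun i' => if i' = i then p else 1)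
          (fun i' _ => by by_cases h : i' = i <;> simp [h])]
        rw [Finset.prod_ite_eq' Finset.univ i (fun _ => p)]
        simp

lemma sum_coinWt (N : ℕ) (p : ℝ) : ∑ c : Fin N → Bool, coinWt N p c = 1 := by
  unfold coinWt
  rw [sum_prod_bool N (fun _ b => if b then p else 1 - p)]
  simp

lemma sum_qual_le_weight (hopt : ∀ Y : Fin N → Fin M → Bool, IsPairwise N M Y →
      weightOf N M θ Y ≤ weightOf N M θ X)
    (m : Fin N → Option (Fin M))
    (hinj : ∀ i i' j, m i = some j → m i' = some j → i = i') :
    ∑ i, qualOf θ m i ≤ weightOf N M θ X := by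
  set Y : Fin N → Fin M → Bool := fun i j => decide (m i = some j) with hY
  have hYpair : IsPairwise N M Y := by
    constructor
    · intro i
      refine Finset.card_le_one.2 fun a ha b hb => ?_
      simp only [hY, Finset.mem_filter, decide_eq_true_eq] at ha hb
      rw [ha.2] at hb
      exact Option.some_inj.1 hb.2
    · intro j
      refine Finset.card_le_one.2 fun a ha b hb => ?_
      simp only [hY, Finset.mem_filter, decide_eq_true_eq] at ha hb
      exact hinj a b j ha.2 hb.2
  have hw : ∑ i, qualOf θ m i = weightOf N M θ Y := by
    unfold weightOf
    refine Finset.sum_congr rfl fun i _ => ?_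
    rw [qualOf]
    cases hm : m i with
    | none => simp [hY, hm]
    | some j0 =>
      simp only [hY, hm]
      rw [Finset.sum_eq_single j0]
      · simp
      · intro b _ hb
        rw [if_neg (by simp [Option.some_inj, (Ne.symm hb)])]
      · intro h; exact absurd (Finset.mem_univ j0) h
  rw [hw]
  exact hopt Y hYpair

lemma coinWt_nonneg (hp0 : 0 ≤ p) (hp1 : p ≤ 1) : 0 ≤ coinWt N p c :=
  Finset.prod_nonneg fun i _ => by by_cases h : c i <;> simp [h, hp0, hp1, sub_nonneg]

variable (p : ℝ)

lemma MQ_pairwise (hpair : IsPairwise N M X) :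
    MQ N M p θ X = p * (weightOf N M θ X / N) := by
  unfold MQ
  have hinner : ∀ (σ : Equiv.Perm (Fin N)),
      ∑ c : Fin N → Bool, coinWt N p c *
        ((1 / (N : ℝ)) * ∑ i, qualOf θ (matchesOf N M θ X σ c) i)
      = (1 / (N : ℝ)) * (p * weightOf N M θ X) := by
    intro σ
    have : ∀ c : Fin N → Bool, coinWt N p c *
        ((1 / (N : ℝ)) * ∑ i, qualOf θ (matchesOf N M θ X σ c) i)
        = (1 / (N : ℝ)) * ∑ i, coinWt N p c *
            (if c i then (∑ j, if X i j then θ i j else 0) else 0) := by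
      intro c
      rw [show (∑ i, qualOf θ (matchesOf N M θ X σ c) i)
          = ∑ i, (if c i then (∑ j, if X i j then θ i j else 0) else 0) from
        Finset.sum_congr rfl fun i _ => qual_pair hpair i]
      rw [mul_left_comm]
      congr 1
      exact Finset.mul_sum _ _ _
    rw [Finset.sum_congr rfl fun c _ => this c, ← Finset.mul_sum]
    congr 1
    rw [Finset.sum_comm]
    rw [Finset.sum_congr rfl fun i _ =>
      sum_coin N p i (∑ j, if X i j then θ i j else 0)]
    rw [← Finset.mul_sum]; rfl
  rw [Finset.sum_congr rfl fun σ _ => hinner σ, Finset.sum_const, Finset.card_univ,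
    Fintype.card_perm, Fintype.card_fin, nsmul_eq_mul]
  have hfac : (N.factorial : ℝ) ≠ 0 := Nat.cast_ne_zero.2 (Nat.factorial_ne_zero N)
  field_simp


/-- Under the uniform choice model with probability `p`, the pairwise policy — which
offers each patient the single provider assigned to them by a maximum-weight bipartite
matching on the weights `θ` — achieves expected match quality at least `p` times the
expected match quality of any (in particular the optimal) assortment policy. -/
theorem pairwise_match_quality (N M : ℕ) (hN : 0 < N) (p : ℝ) (hp0 : 0 ≤ p) (hp1 : p ≤ 1)
    (θ : Fin N → Fin M → ℝ) (hθ : ∀ i j, θ i j ∈ Set.Icc (0 : ℝ) 1)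
    (X : Fin N → Fin M → Bool) (hpair : IsPairwise N M X)
    (hopt : ∀ Y : Fin N → Fin M → Bool, IsPairwise N M Y →
      weightOf N M θ Y ≤ weightOf N M θ X) :
    ∀ Y : Fin N → Fin M → Bool, p * MQ N M p θ Y ≤ MQ N M p θ X := by
  intro Y
  have hMQX : MQ N M p θ X = p * (weightOf N M θ X / N) := MQ_pairwise p hpair
  have hbound : MQ N M p θ Y ≤ weightOf N M θ X / N := by
    unfold MQ
    have h1 : ∀ (σ : Equiv.Perm (Fin N)) (c : Fin N → Bool),
        coinWt N p c * ((1 / (N:ℝ)) * ∑ i, qualOf θ (matchesOf N M θ Y σ c) i)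
        ≤ coinWt N p c * ((1 / (N:ℝ)) * weightOf N M θ X) := by
      intro σ c
      apply mul_le_mul_of_nonneg_left _ (coinWt_nonneg hp0 hp1)
      apply mul_le_mul_of_nonneg_left _ (by positivity)
      exact sum_qual_le_weight hopt _ (runProc_inj N)
    calc (1 / (N.factorial : ℝ)) * ∑ σ : Equiv.Perm (Fin N), ∑ c : Fin N → Bool,
            coinWt N p c * ((1 / (N : ℝ)) * ∑ i, qualOf θ (matchesOf N M θ Y σ c) i)
        ≤ (1 / (N.factorial : ℝ)) * ∑ σ : Equiv.Perm (Fin N), ∑ c : Fin N → Bool,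
            coinWt N p c * ((1 / (N : ℝ)) * weightOf N M θ X) := by
          apply mul_le_mul_of_nonneg_left _ (by positivity)
          exact Finset.sum_le_sum fun σ _ => Finset.sum_le_sum fun c _ => h1 σ c
      _ = weightOf N M θ X / N := by
          rw [Finset.sum_congr rfl fun σ _ => show
              (∑ c : Fin N → Bool, coinWt N p c * ((1 / (N : ℝ)) * weightOf N M θ X))
                = (1 / (N : ℝ)) * weightOf N M θ X by
            rw [← Finset.sum_mul, sum_coinWt, one_mul]]
          rw [Finset.sum_const, Finset.card_univ, Fintype.card_perm, Fintype.card_fin,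
            nsmul_eq_mul]
          have hfac : (N.factorial : ℝ) ≠ 0 := Nat.cast_ne_zero.2 (Nat.factorial_ne_zero N)
          field_simp
  calc p * MQ N M p θ Y ≤ p * (weightOf N M θ X / N) :=
        mul_le_mul_of_nonneg_left hbound hp0
    _ = MQ N M p θ X := hMQX.symm
end
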